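/- Let (X,d) be a separable metric space such that the action (Iso(X),X) is Cauchy-indivisible. If Y is a subset of X ∪ X_l with X ⊆ Y such that the map ω : E × Y → Y × X̂, ω(f,y) = (y, f y), is proper, then Y ⊆ X ∪ X_p. Hence X ∪ X_p is the maximal subset of X ∪ X_l containing X on which ω is proper. -/

import Mathlib

open Filter Topology Set UniformSpace

noncomputable section

/-- The topology of pointwise convergence on the group of surjective isometries of `X`. -/
instance isoPointwiseTopology (X : Type*) [MetricSpace X] : TopologicalSpace (X ≃ᵢ X) :=
  TopologicalSpace.induced (fun g => (g : X → X)) Pi.topologicalSpace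

/-- A net `g` diverges (`g_i → ∞`), i.e. it has no convergent subnet; equivalently,
no cluster point. -/
def DivergentNet {G : Type*} [TopologicalSpace G] {ι : Type*} [Preorder ι]
    (g : ι → G) : Prop :=
  ∀ h : G, ¬ MapClusterPt h atTop g

/-- A sequence `g` diverges (`g_n → ∞`), i.e. it has no convergent subsequence. -/
def DivergentSeq {G : Type*} [TopologicalSpace G] (g : ℕ → G) : Prop :=
  ∀ φ : ℕ → ℕ, StrictMono φ → ∀ h : G, ¬ Tendsto (g ∘ φ) atTop (𝓝 h)

/-- The natural evaluation action of `Iso(X)` on `X` is Cauchy-indivisible: whenever a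
net `g` in `Iso(X)` has no convergent subnet and `(g_i x)` is a Cauchy net for some
`x`, then `(g_i y)` is a Cauchy net for every `y`. -/
def IsoCauchyIndivisible (X : Type*) [MetricSpace X] : Prop :=
  ∀ (ι : Type*) [Nonempty ι] [Preorder ι] [IsDirected ι (· ≤ ·)],
    ∀ g : ι → X ≃ᵢ X, DivergentNet g →
      (∃ x : X, Cauchy (map (fun i => g i x) atTop)) →
      ∀ y : X, Cauchy (map (fun i => g i y) atTop)

/-- Properness of the isometric evaluation action, expressed through emptiness of all
limit sets `L(x)`: no net in `Iso(X)` without convergent subnet has `(g_i x)`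
converging in `X`. -/
def IsoProperLimits (X : Type*) [MetricSpace X] : Prop :=
  ∀ (ι : Type*) [Nonempty ι] [Preorder ι] [IsDirected ι (· ≤ ·)],
    ∀ g : ι → X ≃ᵢ X, DivergentNet g →
      ∀ x y : X, ¬ Tendsto (fun i => g i x) atTop (𝓝 y)

/-- The canonical lift `ĝ` of an isometry of `X` to the completion `X̂`. -/
def hatIso {X : Type*} [MetricSpace X] (g : X ≃ᵢ X) : Completion X → Completion X :=
  Completion.map (g : X → X)

/-- The lifted group `{ĝ : g ∈ Iso(X)}` inside the selfmaps of `X̂`. -/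
def hatIsoSet (X : Type*) [MetricSpace X] : Set (Completion X → Completion X) :=
  Set.range (hatIso (X := X))

/-- The Ellis semigroup `E`: the closure of the lifted group `{ĝ}` in the topology of
pointwise convergence on selfmaps of `X̂`. -/
def Ellis (X : Type*) [MetricSpace X] : Set (Completion X → Completion X) :=
  closure (hatIsoSet X)

/-- The set `H` of pointwise limits on `X̂` of divergent sequences of lifted isometries. -/
def Hset (X : Type*) [MetricSpace X] : Set (Completion X → Completion X) :=
  { h | Continuous h ∧ ∃ g : ℕ → X ≃ᵢ X, DivergentSeq g ∧
      Tendsto (fun n => hatIso (g n)) atTop (𝓝 h) }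

/-- The set `X_l ⊆ X̂` of limit points of the action `(Iso(X), X)` in the completion. -/
def Xl (X : Type*) [MetricSpace X] : Set (Completion X) :=
  { y | ∃ (g : ℕ → X ≃ᵢ X) (x : X), DivergentSeq g ∧
      CauchySeq (fun n => g n x) ∧
      Tendsto (fun n => ((g n x : X) : Completion X)) atTop (𝓝 y) }

/-- The set `X_p ⊆ X̂` of special limit points of the action `(Iso(X), X)`. -/
def Xp (X : Type*) [MetricSpace X] : Set (Completion X) :=
  { y | ∃ (g : ℕ → X ≃ᵢ X) (x : X), DivergentSeq g ∧
      CauchySeq (fun n => g n x) ∧ CauchySeq (fun n => (g n).symm x) ∧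
      Tendsto (fun n => ((g n x : X) : Completion X)) atTop (𝓝 y) }

/-- `X ∪ X_l`, with `X` identified with its image in the completion `X̂`. -/
def XcupXl (X : Type*) [MetricSpace X] : Set (Completion X) :=
  Set.range ((↑) : X → Completion X) ∪ Xl X

/-- `X ∪ X_p`, with `X` identified with its image in the completion `X̂`. -/
def XcupXp (X : Type*) [MetricSpace X] : Set (Completion X) :=
  Set.range ((↑) : X → Completion X) ∪ Xp X

/-- The Ellis semigroup is a group: every element has a two-sided inverse in `E`
(under composition). -/
def EllisIsGroup (X : Type*) [MetricSpace X] : Prop :=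
  ∀ f ∈ Ellis X, ∃ g ∈ Ellis X, f ∘ g = id ∧ g ∘ f = id

/-!
Elements of `E` are isometries of `X̂`, and for isometries pointwise convergence is pointwise
convergence on a countable dense set, so `E` is metrizable and properness of `ω` can be tested on
sequences. If `fₙ ∈ E` and `fₙ x → z` with `x ∈ X`, approximate `fₙ` by lifts `ĝₙ` on more and
more points: then `gₙ x` is Cauchy, and either a subsequence of `gₙ` converges in `Iso(X)`, or by
Cauchy-indivisibility every orbit of `gₙ` is Cauchy and `ĝₙ` converges pointwise on `X̂`; either
way a subsequence of `fₙ` converges in `E`. A point `y = lim gₙ x` of `X_p` is `H x` for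
`H = lim ĝₙ ∈ E`, which has the right inverse `lim ĝₙ⁻¹` because the orbits of `gₙ⁻¹` are Cauchy
too; composing with `H` reduces `y` to `x`.

Conversely, if `y = lim gₙ x` lies in `Y`, then `ω(ĝₙ⁻¹, gₙ x) = (gₙ x, x)` converges, so by
properness `gₙ⁻¹ x = ĝₙ⁻¹ x` has a cluster point in `X̂`, and along a subsequence `y ∈ X_p`.
-/

open TopologicalSpace

section IsometryFamilies

variable {Z W : Type*} [PseudoMetricSpace Z] [PseudoMetricSpace W]

theorem isClosed_setOf_isometry : IsClosed {f : Z → W | Isometry f} := by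
  have h : {f : Z → W | Isometry f} = ⋂ a, ⋂ b, {f | dist (f a) (f b) = dist a b} := by
    ext f
    simp only [mem_ofPred_eq, mem_iInter]
    exact ⟨fun hf => hf.dist_eq, Isometry.of_dist_eq⟩
  rw [h]
  exact isClosed_iInter fun a => isClosed_iInter fun b =>
    isClosed_eq (by fun_prop) continuous_const

theorem tendsto_pi_of_tendsto_on_dense {α : Type*} {l : Filter α} {F : α → Z → W} {G : Z → W}
    (hF : ∀ a, Isometry (F a)) (hG : Isometry G) {D : Set Z} (hD : Dense D)
    (h : ∀ d ∈ D, Tendsto (fun a => F a d) l (𝓝 (G d))) : Tendsto F l (𝓝 G) := by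
  refine tendsto_pi_nhds.2 fun w => Metric.tendsto_nhds.2 fun ε hε => ?_
  obtain ⟨d, hwd, hd⟩ := Metric.dense_iff.1 hD w (ε / 3) (by positivity)
  rw [Metric.mem_ball, dist_comm] at hwd
  filter_upwards [Metric.tendsto_nhds.1 (h d hd) (ε / 3) (by positivity)] with a ha
  calc dist (F a w) (G w) ≤ dist (F a w) (F a d) + dist (F a d) (G d) + dist (G d) (G w) :=
        dist_triangle4 _ _ _ _
    _ < ε := by rw [(hF a).dist_eq, hG.dist_eq, dist_comm d]; linarith

theorem cauchySeq_apply_of_dense {F : ℕ → Z → W} (hF : ∀ n, Isometry (F n)) {D : Set Z}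
    (hD : Dense D) (h : ∀ d ∈ D, CauchySeq fun n => F n d) (w : Z) :
    CauchySeq fun n => F n w := by
  refine Metric.cauchySeq_iff.2 fun ε hε => ?_
  obtain ⟨d, hwd, hd⟩ := Metric.dense_iff.1 hD w (ε / 3) (by positivity)
  rw [Metric.mem_ball, dist_comm] at hwd
  obtain ⟨N, hN⟩ := Metric.cauchySeq_iff.1 (h d hd) (ε / 3) (by positivity)
  refine ⟨N, fun m hm n hn => ?_⟩
  calc dist (F m w) (F n w) ≤ dist (F m w) (F m d) + dist (F m d) (F n d) + dist (F n d) (F n w) :=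
        dist_triangle4 _ _ _ _
    _ < ε := by rw [(hF m).dist_eq, (hF n).dist_eq, dist_comm d]; linarith [hN m hm n hn]

theorem continuous_uncurry_of_isometry {T : Type*} [TopologicalSpace T] {F : T → Z → W}
    (hF : Continuous F) (hiso : ∀ t, Isometry (F t)) :
    Continuous fun p : T × Z => F p.1 p.2 := by
  refine continuous_iff_continuousAt.2 fun p => tendsto_iff_dist_tendsto_zero.2 ?_
  have hsnd : Tendsto (fun q : T × Z => dist q.2 p.2) (𝓝 p) (𝓝 0) :=
    tendsto_iff_dist_tendsto_zero.1 (continuous_snd.tendsto p)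
  have hfst : Tendsto (fun q : T × Z => dist (F q.1 p.2) (F p.1 p.2)) (𝓝 p) (𝓝 0) :=
    tendsto_iff_dist_tendsto_zero.1
      (((continuous_apply p.2).comp (hF.comp continuous_fst)).tendsto p)
  refine squeeze_zero (fun _ => dist_nonneg) (fun q => ?_) (by simpa using hsnd.add hfst)
  calc dist (F q.1 q.2) (F p.1 p.2) ≤ dist (F q.1 q.2) (F q.1 p.2) + dist (F q.1 p.2) (F p.1 p.2) :=
        dist_triangle _ _ _
    _ = dist q.2 p.2 + dist (F q.1 p.2) (F p.1 p.2) := by rw [(hiso q.1).dist_eq]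

theorem Topology.IsInducing.restrict_dense_of_isometry {T : Type*} [TopologicalSpace T]
    {F : T → Z → W} (hF : IsInducing F) (hiso : ∀ t, Isometry (F t)) {D : Set Z} (hD : Dense D) :
    IsInducing fun t (d : D) => F t d := by
  set R : T → D → W := fun t d => F t d
  have hR : Continuous R := continuous_pi fun d => (continuous_apply (d : Z)).comp hF.continuous
  refine isInducing_iff_nhds.2 fun t => le_antisymm (hR.tendsto t).le_comap ?_
  rw [hF.nhds_eq_comap, ← tendsto_iff_comap]
  exact tendsto_pi_of_tendsto_on_dense hiso (hiso t) hD fun d hd =>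
    ((continuous_apply (⟨d, hd⟩ : D)).tendsto (R t)).comp tendsto_comap

theorem Topology.IsInducing.pseudoMetrizableSpace_of_isometry [SeparableSpace Z]
    {T : Type*} [TopologicalSpace T] {F : T → Z → W} (hF : IsInducing F)
    (hiso : ∀ t, Isometry (F t)) : PseudoMetrizableSpace T := by
  obtain ⟨D, hDc, hD⟩ := exists_countable_dense Z
  have := hDc.to_subtype
  exact (hF.restrict_dense_of_isometry hiso hD).pseudoMetrizableSpace

end IsometryFamilies

theorem exists_seq_mem_tendsto_dist_apply {Z W : Type*} [PseudoMetricSpace W] {S : Set (Z → W)}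
    {f : ℕ → Z → W} (hf : ∀ n, f n ∈ closure S) (t : ℕ → Z) :
    ∃ u : ℕ → Z → W, (∀ n, u n ∈ S) ∧
      ∀ k, Tendsto (fun n => dist (u n (t k)) (f n (t k))) atTop (𝓝 0) := by
  have hnear : ∀ n, ∃ v ∈ S, ∀ k ∈ Iic n, dist (v (t k)) (f n (t k)) < 1 / (n + 1) := by
    intro n
    have hU : IsOpen (⋂ k ∈ Iic n, {v : Z → W | dist (v (t k)) (f n (t k)) < 1 / (n + 1)}) :=
      (finite_Iic n).isOpen_biInter fun k _ =>
        isOpen_lt ((continuous_apply _).dist continuous_const) continuous_const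
    have hfU : f n ∈ ⋂ k ∈ Iic n, {v : Z → W | dist (v (t k)) (f n (t k)) < 1 / (n + 1)} := by
      simp only [mem_iInter, mem_ofPred_eq, dist_self]
      exact fun _ _ => Nat.one_div_pos_of_nat
    obtain ⟨v, hvU, hvS⟩ := mem_closure_iff.1 (hf n) _ hU hfU
    exact ⟨v, hvS, fun k hk => mem_iInter₂.1 hvU k hk⟩
  choose u huS hu using hnear
  refine ⟨u, huS, fun k => squeeze_zero' (Eventually.of_forall fun _ => dist_nonneg) ?_
    tendsto_one_div_add_atTop_nhds_zero_nat⟩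
  filter_upwards [eventually_ge_atTop k] with n hn
  exact (hu n k hn).le

section IsometryGroup

variable {X : Type*} [MetricSpace X]

theorem isInducing_isometryEquiv_coe : IsInducing fun g : X ≃ᵢ X => (g : X → X) := ⟨rfl⟩

theorem tendsto_isometryEquiv_nhds_iff {α : Type*} {l : Filter α} {g : α → X ≃ᵢ X}
    {h : X ≃ᵢ X} : Tendsto g l (𝓝 h) ↔ ∀ x, Tendsto (fun a => g a x) l (𝓝 (h x)) := by
  rw [isInducing_isometryEquiv_coe.tendsto_nhds_iff, tendsto_pi_nhds]
  rfl

theorem tendsto_isometryEquiv_symm {α : Type*} {l : Filter α} {g : α → X ≃ᵢ X} {h : X ≃ᵢ X}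
    (hg : Tendsto g l (𝓝 h)) : Tendsto (fun a => (g a).symm) l (𝓝 h.symm) := by
  refine tendsto_isometryEquiv_nhds_iff.2 fun x => tendsto_iff_dist_tendsto_zero.2 ?_
  have hx := tendsto_iff_dist_tendsto_zero.1 (tendsto_isometryEquiv_nhds_iff.1 hg (h.symm x))
  refine hx.congr fun a => ?_
  rw [h.apply_symm_apply, ← (g a).symm.dist_eq, (g a).symm_apply_apply, dist_comm]

instance [SeparableSpace X] : PseudoMetrizableSpace (X ≃ᵢ X) :=
  isInducing_isometryEquiv_coe.pseudoMetrizableSpace_of_isometry fun g => g.isometry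

theorem DivergentSeq.comp_strictMono {g : ℕ → X ≃ᵢ X} (hg : DivergentSeq g) {φ : ℕ → ℕ}
    (hφ : StrictMono φ) : DivergentSeq (g ∘ φ) :=
  fun ψ hψ h ht => hg (φ ∘ ψ) (hφ.comp hψ) h ht

theorem DivergentSeq.symm {g : ℕ → X ≃ᵢ X} (hg : DivergentSeq g) :
    DivergentSeq fun n => (g n).symm :=
  fun φ hφ h hh => hg φ hφ h.symm (tendsto_isometryEquiv_symm hh)

theorem DivergentSeq.divergentNet [SeparableSpace X] {g : ℕ → X ≃ᵢ X}
    (hg : DivergentSeq g) : DivergentNet g := fun h hh =>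
  let ⟨φ, hφ, hconv⟩ := hh.tendsto_subseq
  hg φ hφ h hconv

theorem IsoCauchyIndivisible.cauchySeq_apply.{u, v} {X : Type u} [MetricSpace X]
    [SeparableSpace X] (hCI : IsoCauchyIndivisible.{u, v} X) {g : ℕ → X ≃ᵢ X}
    (hg : DivergentSeq g) {x : X} (hx : CauchySeq fun n => g n x) (y : X) :
    CauchySeq fun n => g n y := by
  -- `IsoCauchyIndivisible.{u, v}` only speaks about nets indexed in `Type v`.
  have hmap : ∀ {α : Type u} (u : ℕ → α),
      map (fun i : ULift.{v} ℕ => u i.down) atTop = map u atTop := fun u => by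
    rw [← (ULift.orderIso.{v} (α := ℕ)).map_atTop, map_map]
    rfl
  have hnet : DivergentNet fun i : ULift.{v} ℕ => g i.down := fun h hh =>
    hg.divergentNet h (by rw [MapClusterPt, ← hmap]; exact hh)
  have hy := hCI (ULift.{v} ℕ) _ hnet ⟨x, by rw [hmap fun n => g n x]; exact hx⟩ y
  rwa [hmap fun n => g n y] at hy

end IsometryGroup

section Ellis

variable {X : Type*} [MetricSpace X]

theorem hatIso_coe (g : X ≃ᵢ X) (x : X) : hatIso g x = (g x : Completion X) :=
  Completion.map_coe g.isometry.uniformContinuous x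

theorem isometry_hatIso (g : X ≃ᵢ X) : Isometry (hatIso g) :=
  g.isometry.completion_map

theorem hatIso_comp (g h : X ≃ᵢ X) : hatIso g ∘ hatIso h = hatIso (h.trans g) :=
  Completion.map_comp g.isometry.uniformContinuous h.isometry.uniformContinuous

theorem continuous_hatIso : Continuous (hatIso : (X ≃ᵢ X) → Completion X → Completion X) := by
  refine continuous_iff_continuousAt.2 fun h => tendsto_pi_of_tendsto_on_dense isometry_hatIso
    (isometry_hatIso h) Completion.denseRange_coe ?_
  rintro _ ⟨x, rfl⟩
  simp only [hatIso_coe]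
  exact (Completion.continuous_coe X).continuousAt.tendsto.comp
    ((continuous_apply x).comp isInducing_isometryEquiv_coe.continuous).continuousAt

theorem hatIso_mem_ellis (g : X ≃ᵢ X) : hatIso g ∈ Ellis X :=
  subset_closure (mem_range_self g)

theorem isometry_of_mem_ellis {f : Completion X → Completion X} (hf : f ∈ Ellis X) :
    Isometry f :=
  closure_minimal (range_subset_iff.2 isometry_hatIso) isClosed_setOf_isometry hf

theorem mem_ellis_of_tendsto {f : ℕ → Completion X → Completion X} {G : Completion X → Completion X}
    (hf : ∀ n, f n ∈ Ellis X) (hG : Tendsto f atTop (𝓝 G)) : G ∈ Ellis X :=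
  isClosed_closure.mem_of_tendsto hG (Eventually.of_forall hf)

theorem comp_mem_ellis {f h : Completion X → Completion X} (hf : f ∈ Ellis X) (hh : h ∈ Ellis X) :
    f ∘ h ∈ Ellis X := by
  have hgh : ∀ g : X ≃ᵢ X, hatIso g ∘ h ∈ Ellis X := fun g =>
    map_mem_closure
      (continuous_pi fun w => (isometry_hatIso g).continuous.comp (continuous_apply w)) hh (by rintro _ ⟨k, rfl⟩; exact ⟨k.trans g, (hatIso_comp g k).symm⟩)
  exact isClosed_closure.closure_subset <|
    map_mem_closure (f := fun k : Completion X → Completion X => k ∘ h)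
      (continuous_pi fun w => continuous_apply (h w)) hf (by rintro _ ⟨g, rfl⟩; exact hgh g)

instance [SeparableSpace X] : PseudoMetrizableSpace (Ellis X) :=
  IsInducing.subtypeVal.pseudoMetrizableSpace_of_isometry fun f => isometry_of_mem_ellis f.2

theorem cauchySeq_coe_completion_iff {u : ℕ → X} :
    CauchySeq (fun n => (u n : Completion X)) ↔ CauchySeq u :=
  show Cauchy (map (((↑) : X → Completion X) ∘ u) atTop) ↔ _ by
    rw [← map_map]
    exact (Completion.isUniformInducing_coe X).cauchy_map_iff

end Ellis

section Compactness

variable {X : Type*} [MetricSpace X]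

theorem hatIso_hatIso_symm (g : X ≃ᵢ X) (w : Completion X) : hatIso g (hatIso g.symm w) = w := by
  have h : hatIso g ∘ hatIso g.symm = id := by
    rw [hatIso, hatIso, Completion.map_comp g.isometry.uniformContinuous
      g.symm.isometry.uniformContinuous, g.self_comp_symm, Completion.map_id]
  exact congrFun h w

theorem exists_tendsto_hatIso_of_cauchySeq {g : ℕ → X ≃ᵢ X}
    (hg : ∀ y, CauchySeq fun n => g n y) :
    ∃ H, Tendsto (fun n => hatIso (g n)) atTop (𝓝 H) := by
  have hw : ∀ w, CauchySeq fun n => hatIso (g n) w :=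
    cauchySeq_apply_of_dense (fun n => isometry_hatIso (g n)) Completion.denseRange_coe (by
      rintro _ ⟨y, rfl⟩
      simpa only [hatIso_coe] using cauchySeq_coe_completion_iff.2 (hg y))
  choose H hH using fun w => cauchySeq_tendsto_of_complete (hw w)
  exact ⟨H, tendsto_pi_nhds.2 hH⟩

theorem IsoCauchyIndivisible.exists_subseq_tendsto_hatIso [SeparableSpace X]
    (hCI : IsoCauchyIndivisible X) {g : ℕ → X ≃ᵢ X} {x : X} (hx : CauchySeq fun n => g n x) :
    ∃ φ : ℕ → ℕ, StrictMono φ ∧ ∃ G ∈ Ellis X, Tendsto (fun n => hatIso (g (φ n))) atTop (𝓝 G) := by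
  by_cases hg : DivergentSeq g
  · obtain ⟨H, hH⟩ := exists_tendsto_hatIso_of_cauchySeq (hCI.cauchySeq_apply hg hx)
    exact ⟨id, strictMono_id, H, mem_ellis_of_tendsto (fun n => hatIso_mem_ellis _) hH, hH⟩
  · simp only [DivergentSeq, not_forall, not_not] at hg
    obtain ⟨φ, hφ, h, hh⟩ := hg
    exact ⟨φ, hφ, hatIso h, hatIso_mem_ellis h, (continuous_hatIso.tendsto h).comp hh⟩

theorem exists_subseq_tendsto_of_tendsto_apply_coe [SeparableSpace X]
    (hCI : IsoCauchyIndivisible X) {f : ℕ → Completion X → Completion X}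
    (hf : ∀ n, f n ∈ Ellis X) {x : X} {z : Completion X}
    (hz : Tendsto (fun n => f n x) atTop (𝓝 z)) :
    ∃ φ : ℕ → ℕ, StrictMono φ ∧ ∃ G ∈ Ellis X, Tendsto (f ∘ φ) atTop (𝓝 G) := by
  have : Nonempty X := ⟨x⟩
  set t : ℕ → Completion X := fun
    | 0 => x
    | k + 1 => denseSeq X k
  have ht : DenseRange t :=
    (Completion.denseRange_coe.comp (denseRange_denseSeq X) (Completion.continuous_coe X)).mono
      (by rintro _ ⟨k, rfl⟩; exact ⟨k + 1, rfl⟩)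
  obtain ⟨u, hu, hut⟩ := exists_seq_mem_tendsto_dist_apply hf t
  choose g hg using hu
  obtain rfl : (fun n => hatIso (g n)) = u := funext hg
  have hgx : Tendsto (fun n => (g n x : Completion X)) atTop (𝓝 z) :=
    hz.congr_dist ((hut 0).congr fun n => by rw [dist_comm]; exact congrArg _ (hatIso_coe _ _))
  obtain ⟨φ, hφ, G, hG, hgG⟩ :=
    hCI.exists_subseq_tendsto_hatIso (cauchySeq_coe_completion_iff.1 hgx.cauchySeq)
  refine ⟨φ, hφ, G, hG, tendsto_pi_of_tendsto_on_dense (fun n => isometry_of_mem_ellis (hf _))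
    (isometry_of_mem_ellis hG) ht ?_⟩
  rintro _ ⟨k, rfl⟩
  exact (tendsto_pi_nhds.1 hgG (t k)).congr_dist ((hut k).comp hφ.tendsto_atTop)

theorem exists_ellis_rightInverse_of_mem_Xp [SeparableSpace X] (hCI : IsoCauchyIndivisible X)
    {y : Completion X} (hy : y ∈ Xp X) :
    ∃ H ∈ Ellis X, (∃ H' : Completion X → Completion X, H ∘ H' = id) ∧ ∃ x : X, H x = y := by
  obtain ⟨g, x, hg, hgx, hgx', hlim⟩ := hy
  obtain ⟨H, hH⟩ := exists_tendsto_hatIso_of_cauchySeq (hCI.cauchySeq_apply hg hgx)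
  obtain ⟨H', hH'⟩ := exists_tendsto_hatIso_of_cauchySeq (hCI.cauchySeq_apply hg.symm hgx')
  refine ⟨H, mem_ellis_of_tendsto (fun n => hatIso_mem_ellis _) hH,
    ⟨H', funext fun w => ?_⟩, x, ?_⟩
  · refine tendsto_nhds_unique (tendsto_pi_nhds.1 hH (H' w)) (tendsto_const_nhds.congr_dist ?_)
    refine (tendsto_iff_dist_tendsto_zero.1 (tendsto_pi_nhds.1 hH' w)).congr fun n => ?_
    rw [← (isometry_hatIso (g n)).dist_eq, hatIso_hatIso_symm]
    rfl
  · exact tendsto_nhds_unique (by simpa only [hatIso_coe] using tendsto_pi_nhds.1 hH x) hlim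

theorem exists_subseq_tendsto_of_tendsto_apply [SeparableSpace X] (hCI : IsoCauchyIndivisible X)
    {f : ℕ → Completion X → Completion X} (hf : ∀ n, f n ∈ Ellis X) {y : Completion X}
    (hy : y ∈ XcupXp X) {z : Completion X} (hz : Tendsto (fun n => f n y) atTop (𝓝 z)) :
    ∃ φ : ℕ → ℕ, StrictMono φ ∧ ∃ G ∈ Ellis X, Tendsto (f ∘ φ) atTop (𝓝 G) := by
  rcases hy with ⟨x, rfl⟩ | hy
  · exact exists_subseq_tendsto_of_tendsto_apply_coe hCI hf hz
  obtain ⟨H, hH, ⟨H', hHH'⟩, x, rfl⟩ := exists_ellis_rightInverse_of_mem_Xp hCI hy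
  obtain ⟨φ, hφ, G, -, hfG⟩ := exists_subseq_tendsto_of_tendsto_apply_coe hCI
    (f := fun n => f n ∘ H) (fun n => comp_mem_ellis (hf n) hH) hz
  have hlim : Tendsto (f ∘ φ) atTop (𝓝 (G ∘ H')) := by
    refine (((continuous_pi fun w => continuous_apply (H' w)).tendsto G).comp hfG).congr fun n => ?_
    change f (φ n) ∘ (H ∘ H') = f (φ n)
    rw [hHH', Function.comp_id]
  exact ⟨φ, hφ, G ∘ H', mem_ellis_of_tendsto (fun n => hf (φ n)) hlim, hlim⟩

end Compactness

section Omega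

variable {X : Type*} [MetricSpace X]

/-- The map `ω(f, y) = (y, f y)` on `E × Y`. -/
def ellisOmega (Y : Set (Completion X)) (p : Ellis X × Y) : Y × Completion X :=
  (p.2, (p.1 : Completion X → Completion X) p.2)

theorem continuous_ellisOmega (Y : Set (Completion X)) : Continuous (ellisOmega Y) :=
  continuous_snd.prodMk <|
    (continuous_uncurry_of_isometry continuous_subtype_val fun f => isometry_of_mem_ellis f.2).comp
      (continuous_fst.prodMk (continuous_subtype_val.comp continuous_snd))

theorem isProperMap_ellisOmega_XcupXp [SeparableSpace X] (hCI : IsoCauchyIndivisible X) :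
    IsProperMap (ellisOmega (XcupXp X)) := by
  refine isProperMap_iff_isCompact_preimage.2 ⟨continuous_ellisOmega _, fun K hK => ?_⟩
  refine IsSeqCompact.isCompact fun p hpK => ?_
  obtain ⟨⟨y, z⟩, hyzK, ψ, hψ, hpψ⟩ := hK.isSeqCompact hpK
  have hy : Tendsto (fun n => (p (ψ n)).2) atTop (𝓝 y) := (continuous_fst.tendsto _).comp hpψ
  have hz : Tendsto (fun n => ((p (ψ n)).1 : Completion X → Completion X) y) atTop (𝓝 z) := by
    refine ((continuous_snd.tendsto _).comp hpψ).congr_dist ?_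
    refine (tendsto_iff_dist_tendsto_zero.1 ((continuous_subtype_val.tendsto y).comp hy)).congr
      fun n => ?_
    exact ((isometry_of_mem_ellis (p (ψ n)).1.2).dist_eq _ _).symm
  obtain ⟨φ, hφ, G, hG, hpG⟩ :=
    exists_subseq_tendsto_of_tendsto_apply hCI (fun n => (p (ψ n)).1.2) y.2 hz
  have hlim : Tendsto (p ∘ ψ ∘ φ) atTop (𝓝 (⟨G, hG⟩, y)) :=
    (tendsto_subtype_rng.2 hpG).prodMk_nhds (hy.comp hφ.tendsto_atTop)
  have hωlim : ellisOmega _ (⟨G, hG⟩, y) = (y, z) :=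
    tendsto_nhds_unique (((continuous_ellisOmega _).tendsto _).comp hlim)
      (hpψ.comp hφ.tendsto_atTop)
  exact ⟨_, show ellisOmega _ _ ∈ K from hωlim ▸ hyzK, ψ ∘ φ, hψ.comp hφ, hlim⟩

theorem subset_XcupXp_of_isProperMap_ellisOmega {Y : Set (Completion X)}
    (hXY : range ((↑) : X → Completion X) ⊆ Y) (hYl : Y ⊆ XcupXl X)
    (hY : IsProperMap (ellisOmega Y)) : Y ⊆ XcupXp X := by
  intro y hy
  rcases hYl hy with hx | ⟨g, x, hg, hgx, hlim⟩
  · exact Or.inl hx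
  set p : ℕ → Ellis X × Y := fun n =>
    (⟨hatIso (g n).symm, hatIso_mem_ellis _⟩, ⟨g n x, hXY (mem_range_self _)⟩)
  have hωp : Tendsto (ellisOmega Y ∘ p) atTop (𝓝 (⟨y, hy⟩, x)) := by
    refine (tendsto_subtype_rng.2 hlim).prodMk_nhds (tendsto_const_nhds.congr fun n => ?_)
    exact (hatIso_coe _ _).trans (congrArg _ ((g n).symm_apply_apply x)) |>.symm
  obtain ⟨q, -, hq⟩ := hY.clusterPt_of_mapClusterPt (ℱ := map p atTop)
    (by rw [MapClusterPt, map_map]; exact hωp.mapClusterPt)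
  have hqx : MapClusterPt ((q.1 : Completion X → Completion X) x) atTop
      fun n => ((g n).symm x : Completion X) := by
    have hev : Continuous fun r : Ellis X × Y => (r.1 : Completion X → Completion X) x :=
      (continuous_apply _).comp (continuous_subtype_val.comp continuous_fst)
    simpa only [Function.comp_def, p, hatIso_coe] using
      MapClusterPt.continuousAt_comp hev.continuousAt hq
  obtain ⟨ψ, hψ, hconv⟩ := hqx.tendsto_subseq
  exact Or.inr ⟨g ∘ ψ, x, hg.comp_strictMono hψ, hgx.comp_tendsto hψ.tendsto_atTop,
    cauchySeq_coe_completion_iff.1 hconv.cauchySeq, hlim.comp hψ.tendsto_atTop⟩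

end Omega

/-- Theorem 5.12 (maximality part): `X ∪ X_p` is the maximal subset of `X ∪ X_l`
containing `X` on which `ω(f,y) = (y, f y)` is proper: `ω` is proper on `X ∪ X_p`,
and any `Y` with `X ⊆ Y ⊆ X ∪ X_l` on which `ω` is proper satisfies `Y ⊆ X ∪ X_p`. -/
theorem XcupXp_maximal_proper (X : Type*) [MetricSpace X]
    [TopologicalSpace.SeparableSpace X] (hCI : IsoCauchyIndivisible X) :
    (IsProperMap (fun p : ↥(Ellis X) × ↥(XcupXp X) =>
        (p.2, (p.1 : Completion X → Completion X) (p.2 : Completion X)))) ∧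
    ∀ Y : Set (Completion X),
      Set.range ((↑) : X → Completion X) ⊆ Y → Y ⊆ XcupXl X →
      IsProperMap (fun p : ↥(Ellis X) × ↥Y =>
        (p.2, (p.1 : Completion X → Completion X) (p.2 : Completion X))) →
      Y ⊆ XcupXp X :=
  ⟨isProperMap_ellisOmega_XcupXp hCI, fun _ hXY hYl hY =>
    subset_XcupXp_of_isProperMap_ellisOmega hXY hYl hY⟩

end
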